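/- arXiv:1301.0854 — 4 statements merged into one kernel-verified Lean document; each statement's English description precedes it below -/
import Mathlib

section
/- If X is an ε-full nearest neighbor Z^d shift of finite type with ε < 1/(2d+2), then for any locally admissible configuration w with shape S whose inner boundary consists only of good letters (letters in G), and any site t ∈ Z^d \ S, there are more than |A|(1 - (2d+1)ε) good letters g such that the concatenation of w with g at site t is locally admissible. -/
open MeasureTheory

abbrev Site (d : ℕ) := Fin d → ℤ

def unitVec (d : ℕ) (i : Fin d) : Site d := fun j => if j = i then 1 else 0

def adjSites {d : ℕ} (u v : Site d) : Prop :=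
  ∃ i : Fin d, v = u + unitVec d i ∨ u = v + unitVec d i

def innerBd {d : ℕ} (S : Set (Site d)) : Set (Site d) :=
  {v | v ∈ S ∧ ∃ u, u ∉ S ∧ adjSites v u}

def outerBd {d : ℕ} (S : Set (Site d)) : Set (Site d) :=
  {v | v ∉ S ∧ ∃ u, u ∈ S ∧ adjSites v u}

def cube (d n : ℕ) : Set (Site d) := {v | ∀ i, 1 ≤ v i ∧ v i ≤ (n : ℤ)}

def symBox (d n : ℕ) : Set (Site d) := {v | ∀ i, |v i| ≤ (n : ℤ)}

def symBoxR (d : ℕ) (r : ℝ) : Set (Site d) := {v | ∀ i, |((v i : ℤ) : ℝ)| ≤ r}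

/-- A nearest neighbor `ℤ^d` SFT is specified by its allowed adjacent pairs
in each of the `d` cardinal directions: `adj i a b` means the pair `a b` may
appear at sites `v, v + e i`. -/
structure NNSFT (d : ℕ) (A : Type) where
  adj : Fin d → A → A → Prop

namespace NNSFT

variable {d : ℕ} {A : Type}

/-- The points of the subshift. -/
def pts (X : NNSFT d A) : Set (Site d → A) :=
  {x | ∀ (i : Fin d) (v : Site d), X.adj i (x v) (x (v + unitVec d i))}

/-- A configuration on shape `S` is locally admissible if it contains no
forbidden adjacent pair inside `S`. -/
def locAdm (X : NNSFT d A) (S : Set (Site d)) (w : Site d → A) : Prop :=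
  ∀ (i : Fin d) (v : Site d), v ∈ S → v + unitVec d i ∈ S →
    X.adj i (w v) (w (v + unitVec d i))

/-- A configuration on shape `S` is globally admissible if it extends to a
point of the subshift. -/
def globAdm (X : NNSFT d A) (S : Set (Site d)) (w : Site d → A) : Prop :=
  ∃ x ∈ X.pts, ∀ v ∈ S, x v = w v

/-- `X` is `ε`-full with good-letter set `G`. -/
def epsFullWith [Fintype A] (X : NNSFT d A) (ε : ℝ) (G : Set A) : Prop :=
  ((G.ncard : ℝ) > (1 - ε) * Fintype.card A) ∧
  ∀ g ∈ G, ∀ i : Fin d,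
    (({a : A | X.adj i g a}.ncard : ℝ) > (1 - ε) * Fintype.card A) ∧
    (({a : A | X.adj i a g}.ncard : ℝ) > (1 - ε) * Fintype.card A)

/-- `X` is `ε`-full. -/
def epsFull [Fintype A] (X : NNSFT d A) (ε : ℝ) : Prop :=
  ∃ G : Set A, X.epsFullWith ε G

/-- The globally admissible patterns on shape `S`. -/
def langSet (X : NNSFT d A) (S : Set (Site d)) : Set (S → A) :=
  (fun x => S.restrict x) '' X.pts

/-- The number of globally admissible patterns on shape `S`. -/
noncomputable def langCard (X : NNSFT d A) (S : Set (Site d)) : ℕ :=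
  (X.langSet S).ncard

/-- Topological entropy, as the infimum (= limit, by subadditivity) of the
normalized log-counts of globally admissible patterns on cubes. -/
noncomputable def entropy (X : NNSFT d A) : ℝ :=
  ⨅ n : ℕ+, Real.log (X.langCard (cube d (n : ℕ))) / ((n : ℕ) : ℝ) ^ d

end NNSFT

instance confMS (d : ℕ) (A : Type) : MeasurableSpace (Site d → A) :=
  @MeasurableSpace.pi (Site d) (fun _ => A) (fun _ => ⊤)

def shiftMap {d : ℕ} {A : Type} (t : Site d) (x : Site d → A) : Site d → A :=
  fun v => x (v + t)

/-- Shift invariance of a measure on the full shift. -/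
def shiftInv {d : ℕ} {A : Type} (μ : Measure (Site d → A)) : Prop :=
  ∀ t : Site d, Measure.map (shiftMap t) μ = μ

/-- The cylinder set of configurations agreeing with `w` on `S`. -/
def cylEvent {d : ℕ} {A : Type} (S : Set (Site d)) (w : Site d → A) :
    Set (Site d → A) := {x | ∀ v ∈ S, x v = w v}

/-- Shannon entropy of the marginal of `μ` on the cube `[1,n]^d`. -/
noncomputable def blockEnt {d : ℕ} {A : Type} [Fintype A]
    (μ : Measure (Site d → A)) (n : ℕ) : ℝ :=
  ∑ w : (Fin d → Fin n) → A,
    Real.negMulLog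
      ((μ {x | ∀ p : Fin d → Fin n, x (fun i => (p i : ℤ) + 1) = w p}).toReal)

/-- Measure-theoretic entropy, as the infimum (= limit, by subadditivity) of
normalized Shannon entropies of cube marginals. -/
noncomputable def measEnt {d : ℕ} {A : Type} [Fintype A]
    (μ : Measure (Site d → A)) : ℝ :=
  ⨅ n : ℕ+, blockEnt μ (n : ℕ) / ((n : ℕ) : ℝ) ^ d

/-- `μ` is a measure of maximal entropy for `X`. -/
def NNSFT.isMME {d : ℕ} {A : Type} [Fintype A] (X : NNSFT d A)
    (μ : Measure (Site d → A)) : Prop :=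
  IsProbabilityMeasure μ ∧ shiftInv μ ∧ μ X.pts = 1 ∧ measEnt μ = X.entropy

/-- `badConn bad S T x` : in the configuration `x` there is a path of
`bad`-letters from `S` to `T`. -/
def badConn {d : ℕ} {A : Type} (bad : A → Prop) (S T : Set (Site d))
    (x : Site d → A) : Prop :=
  ∃ (L : ℕ) (p : ℕ → Site d), p 0 ∈ S ∧ p L ∈ T ∧
    (∀ j < L, adjSites (p j) (p (j + 1))) ∧ ∀ j ≤ L, bad (x (p j))


/-!
Let `T` be the set of good letters admissible at `t`. A letter `g` fails to be in `T` only if it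
is bad, or if it clashes with one of the at most `2d` neighbours of `t` in `S`. Those neighbours
lie in the inner boundary of `S`, so they carry good letters, and each of them rules out fewer
than `ε|A|` letters; bad letters are also fewer than `ε|A|`. Hence `|Tᶜ| < (2d+1)ε|A|`.
-/

open Function

section Counting

variable {α : Type*}

theorem ncard_compl_lt_mul_card_iff [Fintype α] (s : Set α) (ε : ℝ) :
    (sᶜ.ncard : ℝ) < ε * Fintype.card α ↔ (1 - ε) * Fintype.card α < s.ncard := by
  have hsum : (s.ncard : ℝ) + sᶜ.ncard = Fintype.card α := by
    exact_mod_cast Nat.card_eq_fintype_card (α := α) ▸ Set.ncard_add_ncard_compl s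
  constructor <;> intro h <;> linarith

theorem ncard_compl_inter_iInter_le {ι : Type*} [Fintype ι] (s : Set α) (f : ι → Set α) :
    (s ∩ ⋂ i, f i)ᶜ.ncard ≤ sᶜ.ncard + ∑ i, (f i)ᶜ.ncard := by
  rw [Set.compl_inter, Set.compl_iInter]
  exact (Set.ncard_union_le _ _).trans (Nat.add_le_add_left (Set.ncard_iUnion_le_of_fintype _) _)

end Counting

theorem add_unitVec_ne {d : ℕ} (v : Site d) (i : Fin d) : v + unitVec d i ≠ v := by
  intro h
  simpa [unitVec] using congrFun h i

theorem add_unitVec_mem_innerBd {d : ℕ} {S : Set (Site d)} {t : Site d} (ht : t ∉ S)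
    {i : Fin d} (h : t + unitVec d i ∈ S) : t + unitVec d i ∈ innerBd S :=
  ⟨h, t, ht, i, Or.inr rfl⟩

theorem sub_unitVec_mem_innerBd {d : ℕ} {S : Set (Site d)} {t : Site d} (ht : t ∉ S)
    {i : Fin d} (h : t - unitVec d i ∈ S) : t - unitVec d i ∈ innerBd S :=
  ⟨h, t, ht, i, Or.inl (sub_add_cancel t _).symm⟩

namespace NNSFT

variable {d : ℕ} {A : Type}

def fitsBefore (X : NNSFT d A) (i : Fin d) (S : Set (Site d)) (w : Site d → A) (v : Site d) :
    Set A :=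
  {g | v ∈ S → X.adj i g (w v)}

def fitsAfter (X : NNSFT d A) (i : Fin d) (S : Set (Site d)) (w : Site d → A) (v : Site d) :
    Set A :=
  {g | v ∈ S → X.adj i (w v) g}

theorem locAdm_insert_update {X : NNSFT d A} {S : Set (Site d)} {w : Site d → A} {t : Site d}
    {g : A} (hw : X.locAdm S w) (ht : t ∉ S)
    (hg : ∀ i, g ∈ X.fitsBefore i S w (t + unitVec d i) ∩ X.fitsAfter i S w (t - unitVec d i)) :
    X.locAdm (insert t S) (update w t g) := by
  intro i v hv hv'
  rcases hv with rfl | hvS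
  · have hnext : v + unitVec d i ∈ S := hv'.resolve_left (add_unitVec_ne v i)
    rw [update_self, update_of_ne (add_unitVec_ne v i)]
    exact (hg i).1 hnext
  · have hvt : v ≠ t := ne_of_mem_of_not_mem hvS ht
    rcases hv' with hnext | hnextS
    · obtain rfl : v = t - unitVec d i := eq_sub_of_add_eq hnext
      rw [update_of_ne hvt, sub_add_cancel, update_self]
      exact (hg i).2 hvS
    · rw [update_of_ne hvt, update_of_ne (ne_of_mem_of_not_mem hnextS ht)]
      exact hw i v hvS hnextS

section EpsFull

variable [Fintype A] {X : NNSFT d A} {ε : ℝ} {G : Set A}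

theorem epsFullWith.mul_card_pos (hfull : X.epsFullWith ε G) : 0 < ε * Fintype.card A :=
  (Nat.cast_nonneg _).trans_lt ((ncard_compl_lt_mul_card_iff G ε).2 hfull.1)

theorem epsFullWith.ncard_compl_fitsBefore_lt (hfull : X.epsFullWith ε G) (i : Fin d)
    {S : Set (Site d)} (w : Site d → A) (v : Site d) (hv : v ∈ S → w v ∈ G) :
    ((X.fitsBefore i S w v)ᶜ.ncard : ℝ) < ε * Fintype.card A := by
  by_cases hvS : v ∈ S
  · have hset : X.fitsBefore i S w v = {a | X.adj i a (w v)} := by simp [fitsBefore, hvS]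
    exact hset ▸ (ncard_compl_lt_mul_card_iff _ ε).2 (hfull.2 _ (hv hvS) i).2
  · have hset : X.fitsBefore i S w v = Set.univ := by simp [fitsBefore, hvS]
    simpa [hset] using hfull.mul_card_pos

theorem epsFullWith.ncard_compl_fitsAfter_lt (hfull : X.epsFullWith ε G) (i : Fin d)
    {S : Set (Site d)} (w : Site d → A) (v : Site d) (hv : v ∈ S → w v ∈ G) :
    ((X.fitsAfter i S w v)ᶜ.ncard : ℝ) < ε * Fintype.card A := by
  by_cases hvS : v ∈ S
  · have hset : X.fitsAfter i S w v = {a | X.adj i (w v) a} := by simp [fitsAfter, hvS]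
    exact hset ▸ (ncard_compl_lt_mul_card_iff _ ε).2 (hfull.2 _ (hv hvS) i).1
  · have hset : X.fitsAfter i S w v = Set.univ := by simp [fitsAfter, hvS]
    simpa [hset] using hfull.mul_card_pos

theorem epsFullWith.ncard_compl_fitsBefore_inter_fitsAfter_le (hfull : X.epsFullWith ε G)
    {S : Set (Site d)} {w : Site d → A} (hwG : ∀ v ∈ innerBd S, w v ∈ G) {t : Site d}
    (ht : t ∉ S) (i : Fin d) :
    ((X.fitsBefore i S w (t + unitVec d i) ∩ X.fitsAfter i S w (t - unitVec d i))ᶜ.ncard : ℝ) ≤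
      2 * ε * Fintype.card A := by
  have hbefore := hfull.ncard_compl_fitsBefore_lt i w (t + unitVec d i)
    fun h => hwG _ (add_unitVec_mem_innerBd ht h)
  have hafter := hfull.ncard_compl_fitsAfter_lt i w (t - unitVec d i)
    fun h => hwG _ (sub_unitVec_mem_innerBd ht h)
  have hunion : ((X.fitsBefore i S w (t + unitVec d i) ∩
      X.fitsAfter i S w (t - unitVec d i))ᶜ.ncard : ℝ) ≤
      (X.fitsBefore i S w (t + unitVec d i))ᶜ.ncard +
        (X.fitsAfter i S w (t - unitVec d i))ᶜ.ncard := by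
    exact_mod_cast Set.compl_inter _ _ ▸ Set.ncard_union_le _ _
  linarith

end EpsFull

end NNSFT

theorem many_good_extensions_general {d : ℕ} {A : Type} [Fintype A] (X : NNSFT d A)
    (ε : ℝ) (G : Set A) (hfull : X.epsFullWith ε G)
    (S : Set (Site d)) (w : Site d → A)
    (hw : X.locAdm S w) (hwG : ∀ v ∈ innerBd S, w v ∈ G)
    (t : Site d) (ht : t ∉ S) :
    ({g : A | g ∈ G ∧ X.locAdm (insert t S) (Function.update w t g)}.ncard : ℝ) >
      (1 - (2 * d + 1) * ε) * Fintype.card A := by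
  set N : ℝ := (Fintype.card A : ℝ)
  set F : Fin d → Set A := fun i =>
    X.fitsBefore i S w (t + unitVec d i) ∩ X.fitsAfter i S w (t - unitVec d i)
  set T := {g : A | g ∈ G ∧ X.locAdm (insert t S) (Function.update w t g)}
  have hsub : G ∩ ⋂ i, F i ⊆ T := fun g hg =>
    ⟨hg.1, NNSFT.locAdm_insert_update hw ht (Set.mem_iInter.1 hg.2)⟩
  have hTc : (Tᶜ.ncard : ℝ) < (2 * d + 1) * ε * N :=
    calc (Tᶜ.ncard : ℝ) ≤ (Gᶜ.ncard + ∑ i, (F i)ᶜ.ncard : ℕ) := by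
          exact_mod_cast (Set.ncard_le_ncard (Set.compl_subset_compl.2 hsub)).trans
            (ncard_compl_inter_iInter_le G F)
      _ < ε * N + ∑ _i : Fin d, 2 * ε * N := by
          push_cast
          exact add_lt_add_of_lt_of_le ((ncard_compl_lt_mul_card_iff G ε).2 hfull.1)
            (Finset.sum_le_sum fun i _ => hfull.ncard_compl_fitsBefore_inter_fitsAfter_le hwG ht i)
      _ = (2 * d + 1) * ε * N := by
          rw [Finset.sum_const, Finset.card_univ, Fintype.card_fin, nsmul_eq_mul]
          ring
  exact (ncard_compl_lt_mul_card_iff T _).1 (by linarith)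

theorem many_good_extensions {d : ℕ} {A : Type} [Fintype A] (X : NNSFT d A)
    (ε : ℝ) (G : Set A) (hfull : X.epsFullWith ε G) (hε : ε < 1 / (2 * d + 2))
    (S : Set (Site d)) (hS : S.Finite) (w : Site d → A)
    (hw : X.locAdm S w) (hwG : ∀ v ∈ innerBd S, w v ∈ G)
    (t : Site d) (ht : t ∉ S) :
    ({g : A | g ∈ G ∧ X.locAdm (insert t S) (Function.update w t g)}.ncard : ℝ) >
      (1 - (2 * d + 1) * ε) * Fintype.card A :=
  many_good_extensions_general X ε G hfull S w hw hwG t ht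
end

section
/- If X is an ε-full nearest neighbor Z^d shift of finite type with ε < 1/(2d+2), then every locally admissible configuration w whose inner boundary consists only of good letters is globally admissible; moreover w extends to a point of X by appending only good letters. -/
open MeasureTheory

/-!
Fill in the sites outside `S` greedily, one at a time along an enumeration of `ℤ^d`, always
with a good letter. When a site is filled, at most `2d` of its neighbours already carry a letter,
and each of them carries a good one (a neighbour in `S` lies in its inner boundary). By
`ε`-fullness, each of these `2d` constraints and the requirement of being good excludes fewer
than `ε |A|` letters, and `(2d+1) ε < 1`, so a compatible good letter always exists.
-/

variable {d : ℕ} {A : Type}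

lemma adjSites_comm {u v : Site d} : adjSites u v ↔ adjSites v u := by
  simp only [adjSites, or_comm]

lemma self_ne_add_unitVec (v : Site d) (i : Fin d) : v ≠ v + unitVec d i := by
  intro h
  simpa [unitVec] using congrFun h i

lemma exists_forall_mem_of_ncard_gt {ι : Type} [Fintype ι] [Nonempty ι] [Finite A] {ε : ℝ}
    (T : ι → Set A) (hT : ∀ j, (1 - ε) * Nat.card A < (T j).ncard)
    (hι : Fintype.card ι * ε ≤ 1) : ∃ a, ∀ j, a ∈ T j := by
  by_contra! h
  have hcover : (⋃ j, (T j)ᶜ) = Set.univ :=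
    Set.eq_univ_of_forall fun a => Set.mem_iUnion.2 (h a)
  have hcompl : ∀ j, ((T j)ᶜ.ncard : ℝ) < ε * Nat.card A := fun j => by
    have : ((T j).ncard : ℝ) + (T j)ᶜ.ncard = Nat.card A := by
      exact_mod_cast Set.ncard_add_ncard_compl (T j)
    linarith [hT j]
  have hle : (Nat.card A : ℝ) ≤ ∑ j, ((T j)ᶜ.ncard : ℝ) := by
    rw [← Set.ncard_univ, ← hcover]
    exact_mod_cast Set.ncard_iUnion_le_of_fintype _
  have hlt : ∑ j, ((T j)ᶜ.ncard : ℝ) < Fintype.card ι * ε * Nat.card A := by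
    simpa [mul_assoc] using Finset.sum_lt_sum_of_nonempty Finset.univ_nonempty fun j _ => hcompl j
  nlinarith [(Nat.card A).cast_nonneg (α := ℝ)]

namespace NNSFT

def FitsAt (X : NNSFT d A) (P : Site d → Prop) (x : Site d → A) (v : Site d) (a : A) : Prop :=
  ∀ i, (P (v + unitVec d i) → X.adj i a (x (v + unitVec d i))) ∧
    (P (v - unitVec d i) → X.adj i (x (v - unitVec d i)) a)

lemma fitsAt_congr {X : NNSFT d A} {P : Site d → Prop} {x y : Site d → A} {v : Site d} {a : A}
    (h : ∀ u, P u → x u = y u) : X.FitsAt P x v a ↔ X.FitsAt P y v a := by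
  refine forall_congr' fun i => and_congr ?_ ?_ <;>
    exact imp_congr_right fun hP => by rw [h _ hP]

lemma epsFullWith.pos_mul_card [Fintype A] {X : NNSFT d A} {ε : ℝ} {G : Set A}
    (hfull : X.epsFullWith ε G) : 0 < ε * Fintype.card A := by
  have hG : (G.ncard : ℝ) ≤ Fintype.card A := by
    exact_mod_cast (Set.ncard_le_card G).trans_eq Nat.card_eq_fintype_card
  linarith [hfull.1]

lemma epsFullWith.nonempty [Fintype A] {X : NNSFT d A} {ε : ℝ} {G : Set A}
    (hfull : X.epsFullWith ε G) : Nonempty A := by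
  by_contra h
  rw [not_nonempty_iff] at h
  simpa using hfull.pos_mul_card

open Classical in
lemma epsFullWith.exists_mem_fitsAt [Fintype A] {X : NNSFT d A} {ε : ℝ} {G : Set A}
    (hfull : X.epsFullWith ε G) (hε : ε < 1 / (2 * d + 2)) (P : Site d → Prop)
    (x : Site d → A) (v : Site d) (hgood : ∀ u, adjSites v u → P u → x u ∈ G) :
    ∃ a ∈ G, X.FitsAt P x v a := by
  let T : Option ({i // P (v + unitVec d i)} ⊕ {i // P (v - unitVec d i)}) → Set A
    | none => G
    | some (.inl i) => {a | X.adj i a (x (v + unitVec d i))}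
    | some (.inr i) => {a | X.adj i (x (v - unitVec d i)) a}
  have hT : ∀ j, (1 - ε) * Nat.card A < (T j).ncard := by
    rw [Nat.card_eq_fintype_card]
    rintro (_ | ⟨i, hi⟩ | ⟨i, hi⟩)
    · exact hfull.1
    · exact (hfull.2 _ (hgood _ ⟨i, .inl rfl⟩ hi) i).2
    · exact (hfull.2 _ (hgood _ ⟨i, .inr (sub_add_cancel v _).symm⟩ hi) i).1
  have hι : (Fintype.card (Option ({i // P (v + unitVec d i)} ⊕ {i // P (v - unitVec d i)})) : ℝ)
      * ε ≤ 1 := by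
    have hε0 := pos_of_mul_pos_left hfull.pos_mul_card (Nat.cast_nonneg _)
    have h₁ := Fintype.card_subtype_le fun i => P (v + unitVec d i)
    have h₂ := Fintype.card_subtype_le fun i => P (v - unitVec d i)
    rw [Fintype.card_option, Fintype.card_sum, Fintype.card_fin] at *
    rw [lt_div_iff₀ (by positivity)] at hε
    have : ((Fintype.card {i // P (v + unitVec d i)} + Fintype.card {i // P (v - unitVec d i)}
      + 1 : ℕ) : ℝ) ≤ 2 * d + 1 := by exact_mod_cast (by omega)
    push_cast at this ⊢
    nlinarith
  obtain ⟨a, ha⟩ := exists_forall_mem_of_ncard_gt T hT hι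
  exact ⟨a, ha none, fun i => ⟨fun hi => ha (some (.inl ⟨i, hi⟩)),
    fun hi => ha (some (.inr ⟨i, hi⟩))⟩⟩

section GreedyExtension

variable [Nonempty A] (X : NNSFT d A) (G : Set A) (S : Set (Site d)) (w : Site d → A)
  (enc : Site d → ℕ)

open Classical in
noncomputable def greedyExt (v : Site d) : A :=
  if v ∈ S then w v
  else Classical.epsilon fun a => a ∈ G ∧ X.FitsAt (fun u => u ∈ S ∨ enc u < enc v)
    (fun u => if enc u < enc v then greedyExt u else w u) v a
termination_by enc v

lemma greedyExt_of_mem {v : Site d} (hv : v ∈ S) : greedyExt X G S w enc v = w v := by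
  rw [greedyExt, if_pos hv]

lemma greedyExt_of_notMem {v : Site d} (hv : v ∉ S) :
    greedyExt X G S w enc v = Classical.epsilon fun a => a ∈ G ∧
      X.FitsAt (fun u => u ∈ S ∨ enc u < enc v) (greedyExt X G S w enc) v a := by
  rw [greedyExt, if_neg hv]
  refine congrArg _ (funext fun a => propext (and_congr_right' (fitsAt_congr fun u hu => ?_)))
  split_ifs with h
  · rfl
  · rw [greedyExt_of_mem X G S w enc (hu.resolve_right h)]

variable {X G S w}

lemma greedyExt_mem_and_fitsAt [Fintype A] {ε : ℝ} (hfull : X.epsFullWith ε G)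
    (hε : ε < 1 / (2 * d + 2)) (hwG : ∀ v ∈ innerBd S, w v ∈ G) (v : Site d) (hv : v ∉ S) :
    greedyExt X G S w enc v ∈ G ∧ X.FitsAt (fun u => u ∈ S ∨ enc u < enc v)
      (greedyExt X G S w enc) v (greedyExt X G S w enc v) := by
  induction hn : enc v using Nat.strong_induction_on generalizing v with
  | _ n ih =>
    subst hn
    rw [greedyExt_of_notMem X G S w enc hv]
    refine Classical.epsilon_spec (hfull.exists_mem_fitsAt hε _ _ v fun u hvu hu => ?_)
    by_cases huS : u ∈ S
    · rw [greedyExt_of_mem X G S w enc huS]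
      exact hwG u ⟨huS, v, hv, adjSites_comm.1 hvu⟩
    · exact (ih _ (hu.resolve_left huS) u huS rfl).1

lemma greedyExt_mem_pts [Fintype A] {ε : ℝ} (hfull : X.epsFullWith ε G)
    (hε : ε < 1 / (2 * d + 2)) (hw : X.locAdm S w) (hwG : ∀ v ∈ innerBd S, w v ∈ G)
    (henc : Function.Injective enc) : greedyExt X G S w enc ∈ X.pts := by
  intro i v
  set u := v + unitVec d i
  by_cases hS : v ∈ S ∧ u ∈ S
  · rw [greedyExt_of_mem X G S w enc hS.1, greedyExt_of_mem X G S w enc hS.2]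
    exact hw i v hS.1 hS.2
  have hne : enc v ≠ enc u := henc.ne (self_ne_add_unitVec v i)
  by_cases hvu : u ∉ S ∧ (v ∈ S ∨ enc v < enc u)
  · have := ((greedyExt_mem_and_fitsAt enc hfull hε hwG u hvu.1).2 i).2
    simp only [u, add_sub_cancel_right] at this
    exact this hvu.2
  · have hv : v ∉ S ∧ (u ∈ S ∨ enc u < enc v) := by
      by_cases huS : u ∈ S
      · exact ⟨fun hvS => hS ⟨hvS, huS⟩, .inl huS⟩
      · obtain ⟨hvS, hvu⟩ := not_or.1 (not_and.1 hvu huS)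
        exact ⟨hvS, .inr ((not_lt.1 hvu).lt_of_ne hne.symm)⟩
    exact ((greedyExt_mem_and_fitsAt enc hfull hε hwG v hv.1).2 i).1 hv.2

end GreedyExtension

end NNSFT

theorem good_boundary_globally_admissible_general {d : ℕ} {A : Type} [Fintype A]
    (X : NNSFT d A) (ε : ℝ) (G : Set A) (hfull : X.epsFullWith ε G)
    (hε : ε < 1 / (2 * d + 2)) (S : Set (Site d))
    (w : Site d → A) (hw : X.locAdm S w) (hwG : ∀ v ∈ innerBd S, w v ∈ G) :
    X.globAdm S w ∧
      ∃ x ∈ X.pts, (∀ v ∈ S, x v = w v) ∧ ∀ v ∉ S, x v ∈ G := by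
  have := hfull.nonempty
  obtain ⟨enc, henc⟩ := Countable.exists_injective_nat (Site d)
  have hx := NNSFT.greedyExt_mem_pts enc hfull hε hw hwG henc
  have hxS : ∀ v ∈ S, X.greedyExt G S w enc v = w v := fun v => X.greedyExt_of_mem G S w enc
  exact ⟨⟨_, hx, hxS⟩, _, hx, hxS,
    fun v hv => (NNSFT.greedyExt_mem_and_fitsAt enc hfull hε hwG v hv).1⟩

theorem good_boundary_globally_admissible {d : ℕ} {A : Type} [Fintype A]
    (X : NNSFT d A) (ε : ℝ) (G : Set A) (hfull : X.epsFullWith ε G)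
    (hε : ε < 1 / (2 * d + 2)) (S : Set (Site d)) (hS : S.Finite)
    (w : Site d → A) (hw : X.locAdm S w) (hwG : ∀ v ∈ innerBd S, w v ∈ G) :
    X.globAdm S w ∧
      ∃ x ∈ X.pts, (∀ v ∈ S, x v = w v) ∧ ∀ v ∉ S, x v ∈ G :=
  good_boundary_globally_admissible_general X ε G hfull hε S w hw hwG
end

section
/- If a nearest neighbor Z^d shift of finite type X with alphabet A is not ε-full, then its topological entropy satisfies h(X) < log|A| - (1/2)·log(2d/(2d - ε²)); in particular h(X) < log|A| - ε²/(4d). -/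
open MeasureTheory

/-!
Let `N = |A|`. If `X` is not `ε`-full, at least `εN` letters have at most `(1 - ε)N` successors
or at most `(1 - ε)N` predecessors in some direction, so one direction `i` carries `εN / d` of
them. Counting the forbidden pairs in their rows and columns by inclusion–exclusion, direction `i`
forbids more than `ε²N² / (2d)` of the `N²` pairs. A pattern on `[1,2]^d` is determined by its
`2^(d-1)` dominoes in direction `i`, each an allowed pair, so
`h(X) ≤ log |L_{[1,2]^d}(X)| / 2^d ≤ (1/2) log P < log N - (1/2) log (2d / (2d - ε²))`,
where `P` is the number of allowed pairs. The second bound follows from `log x ≥ 1 - 1/x`.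
-/

open Finset

section Relation

variable {A : Type*} [Fintype A] (R : A → A → Prop) [DecidableRel R]

lemma sum_card_not_rel_eq_card_filter_product (S : Finset A) :
    ∑ a ∈ S, #{b | ¬ R a b} = #((S ×ˢ univ).filter fun p => ¬ R p.1 p.2) := by
  simp only [card_filter, sum_product]

lemma sum_card_not_rel_eq_card_filter_product_right (T : Finset A) :
    ∑ b ∈ T, #{a | ¬ R a b} = #((univ ×ˢ T).filter fun p => ¬ R p.1 p.2) := by
  simp only [card_filter, sum_product_right]

lemma sum_card_not_rel_add_sum_le (S T : Finset A) :
    ∑ a ∈ S, #{b | ¬ R a b} + ∑ b ∈ T, #{a | ¬ R a b} ≤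
      #{p : A × A | ¬ R p.1 p.2} + #S * #T := by
  classical
  rw [sum_card_not_rel_eq_card_filter_product, sum_card_not_rel_eq_card_filter_product_right,
    ← card_union_add_card_inter, ← card_product]
  gcongr
  · exact union_subset (filter_subset_filter _ (subset_univ _))
      (filter_subset_filter _ (subset_univ _))
  · intro p hp
    simp only [mem_inter, mem_filter, mem_product] at hp
    exact mem_product.2 ⟨hp.1.1.1, hp.2.1.2⟩

noncomputable def lowOutDeg (t : ℝ) : Finset A := {a | (#{b | R a b} : ℝ) ≤ t}

lemma card_lowOutDeg_mul_le (t : ℝ) :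
    #(lowOutDeg R t) * (Fintype.card A - t) ≤
      ∑ a ∈ lowOutDeg R t, (#{b | ¬ R a b} : ℝ) := by
  rw [← nsmul_eq_mul, ← sum_const]
  refine sum_le_sum fun a ha => ?_
  have hlow : (#{b | R a b} : ℝ) ≤ t := (mem_filter.1 ha).2
  have hsplit : (#{b | R a b} : ℝ) + #{b | ¬ R a b} = Fintype.card A := by
    exact_mod_cast card_filter_add_card_filter_not (s := univ) (R a)
  linarith

lemma sq_div_lt_of_incl_excl {b c q s k : ℝ} (hs : 0 < s) (hk : 1 ≤ k) (hbc : s ≤ k * (b + c))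
    (hb : b * s ≤ q) (hc : c * s ≤ q) (hq : b * s + c * s - b * c ≤ q) :
    s ^ 2 / (2 * k) < q := by
  rw [div_lt_iff₀ (by positivity)]
  -- `q ≥ max b c * s ≥ (b + c) s / 2` gives the bound strictly unless `s = k (b + c)`,
  -- and in that case `4bc ≤ (b + c)²` does.
  rcases hbc.eq_or_lt with rfl | hlt
  · have hσ : 0 < b + c := by nlinarith
    have hbc4 : b * c ≤ (b + c) ^ 2 / 4 := by nlinarith [sq_nonneg (b - c)]
    nlinarith [mul_pos hσ hσ, mul_pos (mul_pos hσ hσ) (by linarith : (0:ℝ) < k)]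
  · nlinarith

lemma sq_div_lt_card_not_rel {k : ℕ} (hk : 0 < k) {t : ℝ} (ht : t < Fintype.card A)
    (hlow : Fintype.card A - t ≤ k * (#(lowOutDeg R t) + #(lowOutDeg (fun a b => R b a) t))) :
    (Fintype.card A - t) ^ 2 / (2 * k) < #{p : A × A | ¬ R p.1 p.2} := by
  set S := lowOutDeg R t
  set T := lowOutDeg (fun a b => R b a) t
  have hS : #S * (Fintype.card A - t) ≤ ∑ a ∈ S, (#{b | ¬ R a b} : ℝ) :=
    card_lowOutDeg_mul_le R t
  have hT : #T * (Fintype.card A - t) ≤ ∑ b ∈ T, (#{a | ¬ R a b} : ℝ) :=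
    card_lowOutDeg_mul_le (fun a b => R b a) t
  have hST : ∑ a ∈ S, (#{b | ¬ R a b} : ℝ) + ∑ b ∈ T, (#{a | ¬ R a b} : ℝ) ≤
      #{p : A × A | ¬ R p.1 p.2} + #S * #T := by
    exact_mod_cast sum_card_not_rel_add_sum_le R S T
  have hS' : (∑ a ∈ S, #{b | ¬ R a b} : ℝ) ≤ #{p : A × A | ¬ R p.1 p.2} := by
    exact_mod_cast (by simpa using sum_card_not_rel_add_sum_le R S ∅)
  have hT' : (∑ b ∈ T, #{a | ¬ R a b} : ℝ) ≤ #{p : A × A | ¬ R p.1 p.2} := by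
    exact_mod_cast (by simpa using sum_card_not_rel_add_sum_le R ∅ T)
  exact sq_div_lt_of_incl_excl (by linarith) (by exact_mod_cast hk) hlow (hS.trans hS')
    (hT.trans hT') (by linarith)

end Relation

section Cube

variable {d : ℕ}

lemma cube_finite (d n : ℕ) : (cube d n).Finite :=
  (Set.Finite.pi fun _ => Set.finite_Icc (1 : ℤ) n).subset fun _ hv i _ => hv i

def bottomFace (d : ℕ) (i : Fin d) : Set (Site d) := {v | v ∈ cube d 2 ∧ v i = 1}

lemma natCard_bottomFace_le (i : Fin d) : Nat.card (bottomFace d i) ≤ 2 ^ (d - 1) := by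
  have hinj : Function.Injective
      fun (v : bottomFace d i) (j : {j // j ≠ i}) => decide (v.1 j = 1) := by
    intro v w hvw
    refine Subtype.ext (funext fun j => ?_)
    by_cases hj : j = i
    · rw [hj, v.2.2, w.2.2]
    · have hv := v.2.1 j
      have hw := w.2.1 j
      have := congrFun hvw ⟨j, hj⟩
      simp only [decide_eq_decide] at this
      omega
  refine (Nat.card_le_card_of_injective _ hinj).trans_eq ?_
  simp [Fintype.card_subtype_compl]

lemma add_unitVec_mem_cube_two {i : Fin d} {v : Site d} (hv : v ∈ bottomFace d i) :
    v + unitVec d i ∈ cube d 2 := by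
  intro j
  have := hv.1 j
  by_cases hj : j = i
  · subst hj
    simp [unitVec, hv.2]
  · simpa [unitVec, hj] using this

lemma mem_bottomFace_or_sub_unitVec_mem {i : Fin d} {v : Site d} (hv : v ∈ cube d 2) :
    v ∈ bottomFace d i ∨ v - unitVec d i ∈ bottomFace d i := by
  by_cases h : v i = 1
  · exact Or.inl ⟨hv, h⟩
  · refine Or.inr ⟨fun j => ?_, ?_⟩
    · have := hv j
      by_cases hj : j = i
      · subst hj
        simp only [Pi.sub_apply, unitVec, if_true]
        omega
      · simpa [unitVec, hj] using this
    · have := hv i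
      simp only [Pi.sub_apply, unitVec, if_true]
      omega

end Cube

namespace NNSFT

variable {d : ℕ} {A : Type} [Fintype A] (X : NNSFT d A)

lemma exists_dir_card_lowOutDeg [∀ i, DecidableRel (X.adj i)] (hd : 0 < d) {ε : ℝ}
    (hnot : ¬ X.epsFull ε) :
    ∃ i : Fin d, ε * Fintype.card A ≤ d *
      (#(lowOutDeg (X.adj i) ((1 - ε) * Fintype.card A)) +
        #(lowOutDeg (fun a b => X.adj i b a) ((1 - ε) * Fintype.card A))) := by
  classical
  set N : ℝ := (Fintype.card A : ℝ)
  set low : Fin d → Finset A := fun i =>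
    lowOutDeg (X.adj i) ((1 - ε) * N) ∪ lowOutDeg (fun a b => X.adj i b a) ((1 - ε) * N)
  set G : Finset A := {a | ∀ i, a ∉ low i}
  have hG : (#G : ℝ) ≤ (1 - ε) * N := by
    by_contra! h
    refine hnot ⟨G, by rwa [Set.ncard_coe_finset], fun g hg i => ?_⟩
    have hgi := (mem_filter.1 hg).2 i
    simp only [low, lowOutDeg, mem_union, mem_filter, mem_univ, true_and, not_or, not_le] at hgi
    simpa [Set.ncard_eq_toFinset_card'] using hgi
  have hbad : ε * N ≤ ∑ i, (#(low i) : ℝ) :=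
    calc ε * N ≤ #Gᶜ := by
          rw [card_compl]
          push_cast [card_le_univ]
          linarith
      _ ≤ #(univ.biUnion low) := by
          gcongr
          intro a ha
          simpa [G] using ha
      _ ≤ ∑ i, (#(low i) : ℝ) := by exact_mod_cast card_biUnion_le
  obtain ⟨i, -, hi⟩ := exists_le_of_sum_le (univ_nonempty_iff.2 ⟨⟨0, hd⟩⟩)
    (f := fun _ => ε * N / d) (g := fun i => (#(low i) : ℝ)) (by
      rw [sum_const, card_univ, Fintype.card_fin, nsmul_eq_mul]
      field_simp
      exact hbad)
  refine ⟨i, ?_⟩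
  rw [div_le_iff₀' (by exact_mod_cast hd)] at hi
  exact hi.trans (mul_le_mul_of_nonneg_left (by exact_mod_cast card_union_le _ _) (by positivity))

lemma exists_card_adj_lt [Nonempty A] [∀ i, DecidableRel (X.adj i)] (hd : 0 < d) {ε : ℝ}
    (hε : 0 < ε) (hnot : ¬ X.epsFull ε) :
    ∃ i : Fin d, (#{p : A × A | X.adj i p.1 p.2} : ℝ) <
      Fintype.card A ^ 2 * ((2 * d - ε ^ 2) / (2 * d)) := by
  obtain ⟨i, hi⟩ := X.exists_dir_card_lowOutDeg hd hnot
  have hsplit : (#{p : A × A | X.adj i p.1 p.2} : ℝ) + #{p : A × A | ¬ X.adj i p.1 p.2} =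
      Fintype.card A ^ 2 := by
    have := card_filter_add_card_filter_not (s := univ) fun p : A × A => X.adj i p.1 p.2
    rw [card_univ, Fintype.card_prod, ← sq] at this
    exact_mod_cast this
  set N : ℝ := (Fintype.card A : ℝ)
  have hN : 0 < N := by positivity
  have hnon := sq_div_lt_card_not_rel (X.adj i) hd (t := (1 - ε) * N) (by nlinarith)
    (by convert hi using 1; ring)
  refine ⟨i, ?_⟩
  have hd' : (0 : ℝ) < 2 * d := by positivity
  rw [show N - (1 - ε) * N = ε * N by ring] at hnon
  rw [mul_div_assoc', lt_div_iff₀ hd']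
  rw [div_lt_iff₀ hd'] at hnon
  nlinarith

lemma langCard_cube_two_le (i : Fin d) [DecidableRel (X.adj i)]
    (hP : 0 < #{p : A × A | X.adj i p.1 p.2}) :
    X.langCard (cube d 2) ≤ #{p : A × A | X.adj i p.1 p.2} ^ 2 ^ (d - 1) := by
  have : Finite (bottomFace d i) := ((cube_finite d 2).subset fun _ hv => hv.1).to_subtype
  let f : X.langSet (cube d 2) → bottomFace d i → {p : A × A // X.adj i p.1 p.2} :=
    fun w u => ⟨(w.1 ⟨u, u.2.1⟩, w.1 ⟨u + unitVec d i, add_unitVec_mem_cube_two u.2⟩), by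
      obtain ⟨x, hx, hw⟩ := w.2
      rw [← hw]
      exact hx i u⟩
  have hf : f.Injective := by
    intro w₁ w₂ h
    refine Subtype.ext (funext fun ⟨v, hv⟩ => ?_)
    rcases mem_bottomFace_or_sub_unitVec_mem (i := i) hv with hvi | hvi
    · exact congrArg (fun g => (g ⟨v, hvi⟩).1.1) h
    · have hcancel : (⟨v - unitVec d i + unitVec d i, add_unitVec_mem_cube_two hvi⟩ :
          cube d 2) = ⟨v, hv⟩ := Subtype.ext (sub_add_cancel v _)
      have := congrArg (fun g => (g ⟨_, hvi⟩).1.2) h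
      simpa only [f, hcancel] using this
  calc X.langCard (cube d 2) = Nat.card (X.langSet (cube d 2)) := (Nat.card_coe_set_eq _).symm
    _ ≤ Nat.card (bottomFace d i → {p : A × A // X.adj i p.1 p.2}) :=
      Nat.card_le_card_of_injective f hf
    _ = #{p : A × A | X.adj i p.1 p.2} ^ Nat.card (bottomFace d i) := by
      rw [Nat.card_fun, Nat.card_eq_fintype_card, Fintype.card_subtype]
    _ ≤ _ := Nat.pow_le_pow_right hP (natCard_bottomFace_le i)

lemma langCard_pos (hX : X.pts.Nonempty) (n : ℕ) : 0 < X.langCard (cube d n) := by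
  have : Finite (cube d n) := (cube_finite d n).to_subtype
  obtain ⟨x, hx⟩ := hX
  exact (Set.ncard_pos (Set.toFinite _)).2 ⟨_, x, hx, rfl⟩

lemma entropy_le_log_langCard_div (hX : X.pts.Nonempty) (n : ℕ+) :
    X.entropy ≤ Real.log (X.langCard (cube d n)) / (n : ℝ) ^ d := by
  refine ciInf_le ⟨0, ?_⟩ n
  rintro _ ⟨m, rfl⟩
  have := Real.log_nonneg (Nat.one_le_cast.2 (X.langCard_pos hX m))
  positivity

lemma card_adj_pos (hX : X.pts.Nonempty) (i : Fin d) [DecidableRel (X.adj i)] :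
    0 < #{p : A × A | X.adj i p.1 p.2} := by
  obtain ⟨x, hx⟩ := hX
  exact card_pos.2 ⟨(x 0, x (0 + unitVec d i)), mem_filter.2 ⟨mem_univ _, hx i 0⟩⟩

lemma entropy_le_log_card_adj_div_two (hX : X.pts.Nonempty) (i : Fin d)
    [DecidableRel (X.adj i)] :
    X.entropy ≤ Real.log #{p : A × A | X.adj i p.1 p.2} / 2 := by
  have hpow : (2 : ℝ) ^ d = 2 * 2 ^ (d - 1) := by rw [← pow_succ', Nat.sub_add_cancel i.pos]
  calc X.entropy ≤ Real.log (X.langCard (cube d 2)) / 2 ^ d := by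
        simpa using X.entropy_le_log_langCard_div hX 2
    _ ≤ Real.log ((#{p : A × A | X.adj i p.1 p.2} : ℝ) ^ 2 ^ (d - 1)) / 2 ^ d := by
        gcongr
        · exact_mod_cast X.langCard_pos hX 2
        · exact_mod_cast X.langCard_cube_two_le i (X.card_adj_pos hX i)
    _ = Real.log #{p : A × A | X.adj i p.1 p.2} / 2 := by
        rw [Real.log_pow, hpow]
        field_simp
        push_cast
        ring

end NNSFT

theorem not_epsFull_entropy_lt {d : ℕ} {A : Type} [Fintype A] (X : NNSFT d A)
    (hd : 0 < d) (hX : X.pts.Nonempty) (ε : ℝ) (hε : 0 < ε) (hε1 : ε ≤ 1)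
    (hnot : ¬ X.epsFull ε) :
    X.entropy <
        Real.log (Fintype.card A) -
          (1 / 2) * Real.log ((2 * d) / (2 * d - ε ^ 2)) ∧
    X.entropy < Real.log (Fintype.card A) - ε ^ 2 / (4 * d) := by
  classical
  have : Nonempty A := ⟨hX.some 0⟩
  obtain ⟨i, hi⟩ := X.exists_card_adj_lt hd hε hnot
  have hd' : (1 : ℝ) ≤ d := Nat.one_le_cast.2 hd
  have hgap : 0 < 2 * (d : ℝ) - ε ^ 2 := by nlinarith
  have hlt : X.entropy < Real.log (Fintype.card A) -
      (1 / 2) * Real.log ((2 * d) / (2 * d - ε ^ 2)) :=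
    calc X.entropy ≤ Real.log #{p : A × A | X.adj i p.1 p.2} / 2 :=
          X.entropy_le_log_card_adj_div_two hX i
      _ < Real.log (Fintype.card A ^ 2 * ((2 * d - ε ^ 2) / (2 * d))) / 2 := by
          gcongr
          exact_mod_cast X.card_adj_pos hX i
      _ = _ := by
          rw [Real.log_mul (by positivity) (by positivity), Real.log_pow,
            ← inv_div (2 * (d : ℝ)), Real.log_inv]
          push_cast
          ring
  refine ⟨hlt, hlt.trans_le ?_⟩
  have hlog := Real.one_sub_inv_le_log_of_pos (x := 2 * d / (2 * d - ε ^ 2)) (by positivity)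
  rw [inv_div, one_sub_div (by positivity)] at hlog
  have : ε ^ 2 / (4 * d) = (1 / 2) * ((2 * d - (2 * d - ε ^ 2)) / (2 * d)) := by
    field_simp
    ring
  linarith
end

section
/- For the iceberg model I_M (the nearest neighbor Z² SFT on alphabet {-M,...,-1,1,...,M} where same-sign letters may always neighbor each other and opposite-sign letters may neighbor only if they are 1 and -1), the topological entropy satisfies h(I_M) ≥ log M + (log 2)/(5M⁵). Consequently log|A_M| - h(I_M) ≤ log 2 - (log 2)/(5M⁵) < log 2. -/
open MeasureTheory

/-- The iceberg model: alphabet `{-M,…,-1,1,…,M}` encoded as `Fin M ⊕ Fin M`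
(`Sum.inl k` is the positive letter `k+1`, `Sum.inr k` is the negative letter
`-(k+1)`).  Same-sign letters may always neighbor each other; opposite-sign
letters may neighbor only if they are `1` and `-1`. -/
def iceberg (M : ℕ) : NNSFT 2 (Fin M ⊕ Fin M) where
  adj _ a b :=
    match a, b with
    | Sum.inl _, Sum.inl _ => True
    | Sum.inr _, Sum.inr _ => True
    | Sum.inl i, Sum.inr j => (i : ℕ) = 0 ∧ (j : ℕ) = 0
    | Sum.inr i, Sum.inl j => (i : ℕ) = 0 ∧ (j : ℕ) = 0

/-!
Fix a residue `r` mod 5. The plus shapes centred at the sites `(x, y)` with `x + 2y ≡ r` tile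
`ℤ²`. In every tile whose centre lies in `[1,n]²` put either an arbitrary filling by positive
letters (`M ^ k` ways, `k ≤ 5` the number of its cells in the grid) or the tile of `1`s with a `-1`
at its centre; every other site of the grid gets an arbitrary positive letter, every site outside
it the letter `1`. A `-1` only ever touches `1`s, so all these configurations are points of
`I_M`, and distinct choices differ on `[1,n]²`. Hence `|L_{[1,n]²}| ≥ ∏_c (M ^ k_c + 1) · M ^ j`
with `j` the number of remaining grid sites, and `log (M ^ k + 1) ≥ k log M + log 2 / M ^ 5` by
concavity of `log`. For the best `r` at least `n² / 5` centres lie in the grid, which gives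
`log |L_{[1,n]²}| ≥ n² (log M + log 2 / (5 M ^ 5))`.
-/

theorem NNSFT.card_le_langCard {d : ℕ} {A : Type} {ι : Type*} [Finite A] [Fintype ι] (X : NNSFT d A)
    {S : Set (Site d)} (hS : S.Finite) (x : ι → Site d → A) (hx : ∀ i, x i ∈ X.pts)
    (hinj : ∀ i j, Set.EqOn (x i) (x j) S → i = j) : Fintype.card ι ≤ X.langCard S := by
  have : Finite S := hS.to_subtype
  rw [← Nat.card_eq_fintype_card, ← Set.ncard_univ]
  exact Set.ncard_le_ncard_of_injOn (fun i => S.domRestrict (x i)) (fun i _ => ⟨x i, hx i, rfl⟩)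
    (fun i _ j _ h => hinj i j fun v hv => congrFun h ⟨v, hv⟩) (Set.toFinite _)

theorem Real.mul_log_two_le_log_one_add {u : ℝ} (hu₀ : 0 ≤ u) (hu₁ : u ≤ 1) :
    u * Real.log 2 ≤ Real.log (1 + u) := by
  have h := strictConcaveOn_log_Ioi.concaveOn.2 (x := 2) (y := 1) (by norm_num)
    (by norm_num) hu₀ (sub_nonneg.2 hu₁) (by ring)
  simp only [smul_eq_mul, Real.log_one, mul_zero, add_zero] at h
  rwa [show u * 2 + (1 - u) * 1 = 1 + u by ring] at h

theorem Real.mul_log_add_log_two_div_le_log_pow_add_one {t : ℝ} (ht : 1 ≤ t) {k m : ℕ}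
    (hkm : k ≤ m) : k * Real.log t + Real.log 2 / t ^ m ≤ Real.log (t ^ k + 1) := by
  have htk : 0 < t ^ k := by positivity
  have hu : (t ^ m)⁻¹ ≤ (t ^ k)⁻¹ := inv_anti₀ htk (pow_le_pow_right₀ ht hkm)
  have hu₁ : (t ^ m)⁻¹ ≤ 1 := inv_le_one_of_one_le₀ (one_le_pow₀ ht)
  calc k * Real.log t + Real.log 2 / t ^ m
      ≤ Real.log (t ^ k) + Real.log (1 + (t ^ m)⁻¹) := by
        rw [Real.log_pow, div_eq_inv_mul]
        gcongr
        exact Real.mul_log_two_le_log_one_add (by positivity) hu₁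
    _ ≤ Real.log (t ^ k) + Real.log (1 + (t ^ k)⁻¹) := by gcongr
    _ = Real.log (t ^ k + 1) := by
        rw [← Real.log_mul htk.ne' (by positivity), mul_add, mul_inv_cancel₀ htk.ne', mul_one]

theorem Real.le_log_prod_pow_add_one_mul_pow {ι : Type*} (s : Finset ι) (k : ι → ℕ) (j m : ℕ)
    {t : ℝ} (ht : 1 ≤ t) (hk : ∀ i ∈ s, k i ≤ m) :
    ((∑ i ∈ s, k i + j : ℕ) : ℝ) * Real.log t + s.card * (Real.log 2 / t ^ m) ≤
      Real.log ((∏ i ∈ s, (t ^ k i + 1)) * t ^ j) := by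
  have ht₀ : 0 < t := by linarith
  rw [Real.log_mul (Finset.prod_pos fun i _ => by positivity).ne' (by positivity),
    Real.log_prod fun i _ => by positivity, Real.log_pow]
  have := Finset.sum_le_sum fun i hi =>
    Real.mul_log_add_log_two_div_le_log_pow_add_one ht (hk i hi)
  rw [Finset.sum_add_distrib, ← Finset.sum_mul, Finset.sum_const, nsmul_eq_mul] at this
  push_cast
  linarith

namespace Iceberg

noncomputable def grid (n : ℕ) : Finset (ℤ × ℤ) := Finset.Icc (1 : ℤ) n ×ˢ Finset.Icc (1 : ℤ) n

def plus (c : ℤ × ℤ) : Finset (ℤ × ℤ) :=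
  [c, (c.1 + 1, c.2), (c.1 - 1, c.2), (c.1, c.2 + 1), (c.1, c.2 - 1)].toFinset

/-- The centre of the tile containing `p`, when `ℤ²` is tiled by the plus shapes centred at the
sites `c` with `c.1 + 2 * c.2 ≡ r [ZMOD 5]`. -/
def owner (r : ℤ) (p : ℤ × ℤ) : ℤ × ℤ :=
  if (p.1 + 2 * p.2 - r) % 5 = 0 then p
  else if (p.1 + 2 * p.2 - r) % 5 = 1 then (p.1 - 1, p.2)
  else if (p.1 + 2 * p.2 - r) % 5 = 2 then (p.1, p.2 - 1)
  else if (p.1 + 2 * p.2 - r) % 5 = 3 then (p.1, p.2 + 1)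
  else (p.1 + 1, p.2)

theorem card_plus_le (c : ℤ × ℤ) : (plus c).card ≤ 5 := List.toFinset_card_le _

theorem mem_plus_comm {p q : ℤ × ℤ} : p ∈ plus q ↔ q ∈ plus p := by
  simp only [plus, List.mem_toFinset, List.mem_cons, List.not_mem_nil, or_false, Prod.ext_iff]
  omega

theorem owner_eq_self_iff {r : ℤ} {p : ℤ × ℤ} :
    owner r p = p ↔ (p.1 + 2 * p.2 - r) % 5 = 0 := by
  unfold owner
  split_ifs <;> simp [Prod.ext_iff, *]

theorem owner_eq_iff_mem_plus {r : ℤ} {c p : ℤ × ℤ} (hc : owner r c = c) :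
    owner r p = c ↔ p ∈ plus c := by
  rw [owner_eq_self_iff] at hc
  simp only [plus, List.mem_toFinset, List.mem_cons, List.not_mem_nil, or_false, Prod.ext_iff]
  unfold owner
  split_ifs <;> omega

section Tiles

variable (n : ℕ) (r : ℤ)

noncomputable def centers : Finset (ℤ × ℤ) := {p ∈ grid n | owner r p = p}

noncomputable def block (c : ℤ × ℤ) : Finset (ℤ × ℤ) := {p ∈ grid n | owner r p = c}

noncomputable def rest : Finset (ℤ × ℤ) := {p ∈ grid n | owner r p ∉ centers n r}

/-- For a tile centred in the grid, `none` stands for the tile of `1`s with `-1` at its centre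
and `some f` for the positive filling `f`; `rest n r` consists of the grid sites whose tile is
centred outside the grid. -/
abbrev Data (M : ℕ) : Type :=
  ((c : centers n r) → Option (block n r c → Fin M)) × (rest n r → Fin M)

theorem card_data (M : ℕ) : Fintype.card (Data n r M) =
    (∏ c ∈ centers n r, (M ^ (block n r c).card + 1)) * M ^ (rest n r).card := by
  rw [Fintype.card_prod, Fintype.card_pi]
  simp only [Fintype.card_option, Fintype.card_fun, Fintype.card_coe, Fintype.card_fin]
  rw [Finset.prod_coe_sort (centers n r) fun c => M ^ (block n r c).card + 1]

theorem sum_card_block_add_card_rest :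
    ∑ c ∈ centers n r, (block n r c).card + (rest n r).card = n ^ 2 := by
  have hfib := Finset.card_eq_sum_card_fiberwise (s := {p ∈ grid n | owner r p ∈ centers n r})
    (t := centers n r) (f := owner r) fun p hp => (Finset.mem_filter.1 hp).2
  simp only [Finset.filter_filter] at hfib
  have hblock : ∀ c ∈ centers n r,
      {p ∈ grid n | owner r p ∈ centers n r ∧ owner r p = c} = block n r c := by
    intro c hc
    ext p
    simp only [block, Finset.mem_filter]
    constructor
    · exact fun h => ⟨h.1, h.2.2⟩
    · rintro ⟨hp, rfl⟩
      exact ⟨hp, hc, rfl⟩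
  rw [Finset.sum_congr rfl fun c hc => congrArg Finset.card (hblock c hc)] at hfib
  rw [← hfib, rest, Finset.card_filter_add_card_filter_not, grid, Finset.card_product,
    Int.card_Icc, add_sub_cancel_right, Int.toNat_natCast, sq]

variable {n r}

theorem mem_block_self {c : ℤ × ℤ} (hc : c ∈ centers n r) : c ∈ block n r c := by
  simp only [centers, block, Finset.mem_filter] at hc ⊢
  exact hc

theorem card_block_le {c : ℤ × ℤ} (hc : c ∈ centers n r) : (block n r c).card ≤ 5 := by
  refine (Finset.card_le_card fun p hp => ?_).trans (card_plus_le c)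
  exact (owner_eq_iff_mem_plus (Finset.mem_filter.1 hc).2).1 (Finset.mem_filter.1 hp).2

theorem exists_le_card_centers (n : ℕ) : ∃ r : ℤ, (n : ℝ) ^ 2 / 5 ≤ (centers n r).card := by
  have hcard : (Finset.Ico (0 : ℤ) 5).card • ((n : ℝ) ^ 2 / 5) ≤ (grid n).card := by
    rw [Int.card_Ico, grid, Finset.card_product, Int.card_Icc, add_sub_cancel_right,
      Int.toNat_natCast, nsmul_eq_mul, sub_zero, show (5 : ℤ).toNat = 5 from rfl]
    push_cast
    linarith
  obtain ⟨r, hr₅, hr⟩ := Finset.exists_le_card_fiber_of_nsmul_le_card_of_maps_to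
    (s := grid n) (t := Finset.Ico (0 : ℤ) 5) (f := fun p => (p.1 + 2 * p.2) % 5)
    (fun p _ => Finset.mem_Ico.2
      ⟨Int.emod_nonneg _ (by norm_num), Int.emod_lt_of_pos _ (by norm_num)⟩)
    ⟨0, by simp⟩ hcard
  refine ⟨r, hr.trans_eq ?_⟩
  congr 2
  refine Finset.filter_congr fun p _ => ?_
  rw [owner_eq_self_iff]
  have := Finset.mem_Ico.1 hr₅
  omega

end Tiles

local notation "toPair" => piFinTwoEquiv fun _ : Fin 2 => ℤ

theorem toPair_add_unitVec_mem_plus (v : Site 2) (i : Fin 2) :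
    toPair (v + unitVec 2 i) ∈ plus (toPair v) ∧ toPair (v + unitVec 2 i) ≠ toPair v := by
  fin_cases i <;> simp [plus, unitVec, Prod.ext_iff]

theorem cube_two_eq_preimage_grid (n : ℕ) : cube 2 n = toPair ⁻¹' grid n := by
  ext v
  simp [cube, grid, Fin.forall_fin_two, and_and_and_comm]

section Config

variable {M n : ℕ} {r : ℤ}

def decode (x : ℤ × ℤ → Fin M ⊕ Fin M) : Data n r M :=
  (fun c => if (x c).isRight then none else some fun q => Sum.elim id id (x q),
    fun q => Sum.elim id id (x q))

theorem decode_congr {x y : ℤ × ℤ → Fin M ⊕ Fin M} (h : Set.EqOn x y (grid n)) :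
    (decode x : Data n r M) = decode y := by
  have hc : ∀ c : centers n r, x c = y c := fun c => h (Finset.mem_filter.1 c.2).1
  have hb : ∀ (c : centers n r) (q : block n r c), x q = y q :=
    fun _ q => h (Finset.mem_filter.1 q.2).1
  have hr : ∀ q : rest n r, x q = y q := fun q => h (Finset.mem_filter.1 q.2).1
  simp only [decode, hc, hb, hr]

variable [NeZero M]

noncomputable def config (d : Data n r M) (p : ℤ × ℤ) : Fin M ⊕ Fin M :=
  if hp : p ∈ grid n then
    if hc : owner r p ∈ centers n r then
      (d.1 ⟨owner r p, hc⟩).elim (if p = owner r p then .inr 0 else .inl 0)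
        fun f => .inl (f ⟨p, Finset.mem_filter.2 ⟨hp, rfl⟩⟩)
    else .inl (d.2 ⟨p, Finset.mem_filter.2 ⟨hp, hc⟩⟩)
  else .inl 0

theorem config_of_notMem_grid (d : Data n r M) {p : ℤ × ℤ} (hp : p ∉ grid n) :
    config d p = .inl 0 := dif_neg hp

theorem config_of_mem_block (d : Data n r M) {c p : ℤ × ℤ} (hc : c ∈ centers n r)
    (hp : p ∈ block n r c) :
    config d p = (d.1 ⟨c, hc⟩).elim (if p = c then .inr 0 else .inl 0)
      fun f => .inl (f ⟨p, hp⟩) := by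
  obtain ⟨hpG, rfl⟩ := Finset.mem_filter.1 hp
  rw [config, dif_pos hpG, dif_pos hc]

theorem config_of_mem_rest (d : Data n r M) {p : ℤ × ℤ} (hp : p ∈ rest n r) :
    config d p = .inl (d.2 ⟨p, hp⟩) := by
  obtain ⟨hpG, hc⟩ := Finset.mem_filter.1 hp
  rw [config, dif_pos hpG, dif_neg hc]

theorem exists_of_config_eq_inr (d : Data n r M) {p : ℤ × ℤ} {k : Fin M}
    (h : config d p = .inr k) : ∃ hp : p ∈ centers n r, d.1 ⟨p, hp⟩ = none ∧ k = 0 := by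
  by_cases hp : p ∈ centers n r
  · rw [config_of_mem_block d hp (mem_block_self hp)] at h
    rcases ho : d.1 ⟨p, hp⟩ with _ | f <;> simp [ho] at h
    exact ⟨hp, ho, h.symm⟩
  · exfalso
    by_cases hpG : p ∈ grid n
    · by_cases hc : owner r p ∈ centers n r
      · have hpo : p ≠ owner r p := fun hpo => hp (Finset.mem_filter.2 ⟨hpG, hpo.symm⟩)
        rw [config_of_mem_block d hc (Finset.mem_filter.2 ⟨hpG, rfl⟩)] at h
        rcases ho : d.1 ⟨owner r p, hc⟩ with _ | f <;> simp [ho, hpo] at h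
      · simp [config_of_mem_rest d (Finset.mem_filter.2 ⟨hpG, hc⟩)] at h
    · simp [config_of_notMem_grid d hpG] at h

theorem config_eq_inl_zero_of_mem_plus (d : Data n r M) {c q : ℤ × ℤ} (hc : c ∈ centers n r)
    (ho : d.1 ⟨c, hc⟩ = none) (hq : q ∈ plus c) (hqc : q ≠ c) : config d q = .inl 0 := by
  by_cases hqG : q ∈ grid n
  · have hqb : q ∈ block n r c :=
      Finset.mem_filter.2 ⟨hqG, (owner_eq_iff_mem_plus (Finset.mem_filter.1 hc).2).2 hq⟩
    simp [config_of_mem_block d hc hqb, ho, hqc]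
  · exact config_of_notMem_grid d hqG

theorem iceberg_adj_config (d : Data n r M) {p q : ℤ × ℤ} (hq : q ∈ plus p) (hqp : q ≠ p)
    (i : Fin 2) : (iceberg M).adj i (config d p) (config d q) := by
  rcases hxp : config d p with a | a <;> rcases hxq : config d q with b | b
  · trivial
  · obtain ⟨hqc, ho, rfl⟩ := exists_of_config_eq_inr d hxq
    have := config_eq_inl_zero_of_mem_plus d hqc ho (mem_plus_comm.1 hq) hqp.symm
    obtain rfl : a = 0 := Sum.inl_injective (hxp.symm.trans this)
    exact ⟨Fin.val_zero M, Fin.val_zero M⟩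
  · obtain ⟨hpc, ho, rfl⟩ := exists_of_config_eq_inr d hxp
    have := config_eq_inl_zero_of_mem_plus d hpc ho hq hqp
    obtain rfl : b = 0 := Sum.inl_injective (hxq.symm.trans this)
    exact ⟨Fin.val_zero M, Fin.val_zero M⟩
  · trivial

theorem config_comp_mem_pts (d : Data n r M) : config d ∘ toPair ∈ (iceberg M).pts :=
  fun i v => iceberg_adj_config d (toPair_add_unitVec_mem_plus v i).1
    (toPair_add_unitVec_mem_plus v i).2 i

theorem decode_config (d : Data n r M) : decode (config d) = d := by
  refine Prod.ext (funext fun ⟨c, hc⟩ => ?_) (funext fun q => ?_)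
  · rcases ho : d.1 ⟨c, hc⟩ with _ | f
    · simp [decode, config_of_mem_block d hc (mem_block_self hc), ho]
    · simp only [decode, config_of_mem_block d hc (mem_block_self hc), ho, Option.elim_some,
        Sum.isRight_inl, Bool.false_eq_true, if_false, Option.some.injEq]
      funext q
      rw [config_of_mem_block d hc q.2, ho]
      rfl
  · simp [decode, config_of_mem_rest d q.2]

theorem card_data_le_langCard :
    Fintype.card (Data n r M) ≤ (iceberg M).langCard (cube 2 n) := by
  rw [cube_two_eq_preimage_grid]
  refine (iceberg M).card_le_langCard
    ((grid n).finite_toSet.preimage (Equiv.injective _).injOn) (fun d => config d ∘ toPair)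
    config_comp_mem_pts fun d d' h => ?_
  have h' : Set.EqOn (config d) (config d') (grid n) := fun p hp => by
    simpa using h (x := (toPair).symm p) (by simpa using hp)
  rw [← decode_config d, ← decode_config d', decode_congr h']

end Config

theorem le_log_langCard_cube (M n : ℕ) [NeZero M] :
    (n : ℝ) ^ 2 * (Real.log M + Real.log 2 / (5 * (M : ℝ) ^ 5)) ≤
      Real.log ((iceberg M).langCard (cube 2 n)) := by
  obtain ⟨r, hr⟩ := exists_le_card_centers n
  have hM : (1 : ℝ) ≤ M := by exact_mod_cast NeZero.one_le
  have hcount := Real.le_log_prod_pow_add_one_mul_pow (centers n r) (fun c => (block n r c).card)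
    (rest n r).card 5 hM fun c hc => card_block_le hc
  rw [sum_card_block_add_card_rest] at hcount
  have hdata : Real.log (Fintype.card (Data n r M)) ≤ Real.log ((iceberg M).langCard (cube 2 n)) :=
    Real.log_le_log (by exact_mod_cast Fintype.card_pos) (by exact_mod_cast card_data_le_langCard)
  rw [card_data] at hdata
  push_cast at hcount hdata
  calc (n : ℝ) ^ 2 * (Real.log M + Real.log 2 / (5 * (M : ℝ) ^ 5))
      = (n : ℝ) ^ 2 * Real.log M + (n : ℝ) ^ 2 / 5 * (Real.log 2 / (M : ℝ) ^ 5) := by ring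
    _ ≤ (n : ℝ) ^ 2 * Real.log M + (centers n r).card * (Real.log 2 / (M : ℝ) ^ 5) := by
        gcongr
    _ ≤ _ := hcount.trans hdata

end Iceberg

theorem iceberg_entropy (M : ℕ) (hM : 1 ≤ M) :
    (iceberg M).entropy ≥ Real.log M + Real.log 2 / (5 * (M : ℝ) ^ 5) ∧
    Real.log (Fintype.card (Fin M ⊕ Fin M)) - (iceberg M).entropy ≤
      Real.log 2 - Real.log 2 / (5 * (M : ℝ) ^ 5) ∧
    Real.log 2 - Real.log 2 / (5 * (M : ℝ) ^ 5) < Real.log 2 := by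
  have : NeZero M := ⟨by omega⟩
  have hent : Real.log M + Real.log 2 / (5 * (M : ℝ) ^ 5) ≤ (iceberg M).entropy :=
    le_ciInf fun n => (le_div_iff₀ (by positivity)).2 <| by
      rw [mul_comm]
      exact Iceberg.le_log_langCard_cube M n
  have hcard : Real.log (Fintype.card (Fin M ⊕ Fin M)) = Real.log 2 + Real.log M := by
    rw [Fintype.card_sum, Fintype.card_fin, ← two_mul, Nat.cast_mul, Nat.cast_two,
      Real.log_mul two_ne_zero (by positivity)]
  have hgain : 0 < Real.log 2 / (5 * (M : ℝ) ^ 5) := by positivity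
  exact ⟨hent, by linarith, by linarith⟩
end
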